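/- arXiv:2602.17945 — 2 statements merged into one kernel-verified Lean document; each statement's English description precedes it below -/
import Mathlib

section
/- Consider the abstract Poisson algebra on F(H, F_1,...,F_{m-1}, G_1,...,G_{m-1}) with {H,⋅} = 0, {F_i,F_j} = {G_i,G_j} = 0, and {F_i,G_j} = −F_i G_j if i+j−m−1 < 0, {F_i,G_j} = −F_{m-j} G_{m-i} otherwise. This bracket satisfies the Jacobi identity. -/
noncomputable def pd {n : ℕ} (i : Fin n) (f : (Fin n → ℝ) → ℝ) (x : Fin n → ℝ) : ℝ :=
  fderiv ℝ f x (Pi.single i 1)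

noncomputable def pb {n : ℕ} (P : Fin n → Fin n → (Fin n → ℝ) → ℝ)
    (f g : (Fin n → ℝ) → ℝ) (x : Fin n → ℝ) : ℝ :=
  ∑ i : Fin n, ∑ j : Fin n, P i j x * pd i f x * pd j g x

def get {n : ℕ} (x : Fin n → ℝ) (i : ℕ) : ℝ := if h : i < n then x ⟨i, h⟩ else 0

/- Abstract even-case algebra of integrals: `2m-1` independent variables,
coordinate `0` is `H`, coordinates `1,…,m-1` are `F_1,…,F_{m-1}` and
coordinates `m,…,2m-2` are `G_1,…,G_{m-1}` (`G_j` at index `(m-1)+j`). -/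

/-- The value of the bracket `{F_i, G_j}`:
`-F_i G_j` if `κ(i,j) = i+j-m-1 < 0`, and `-F_{m-j} G_{m-i}` otherwise. -/
noncomputable def peFG (m i j : ℕ) (y : Fin (2*m-1) → ℝ) : ℝ :=
  if i + j < m + 1 then -(get y i * get y ((m-1)+j))
  else -(get y (m-j) * get y ((m-1)+(m-i)))

/-- The even-case structure matrix: `{H,·} = 0`, `{F_i,F_j} = {G_i,G_j} = 0`, and
`{F_i,G_j}` as in `peFG`, extended antisymmetrically. -/
noncomputable def Pe (m : ℕ) : Fin (2*m-1) → Fin (2*m-1) → (Fin (2*m-1) → ℝ) → ℝ :=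
  fun a b y =>
    if 1 ≤ (a:ℕ) ∧ (a:ℕ) ≤ m-1 ∧ m ≤ (b:ℕ) then peFG m (a:ℕ) ((b:ℕ)-(m-1)) y
    else if 1 ≤ (b:ℕ) ∧ (b:ℕ) ≤ m-1 ∧ m ≤ (a:ℕ) then -(peFG m (b:ℕ) ((a:ℕ)-(m-1)) y)
    else 0

section general
variable {n : ℕ} {P : Fin n → Fin n → (Fin n → ℝ) → ℝ} {f g h : (Fin n → ℝ) → ℝ} {x : Fin n → ℝ}

lemma contDiff_pd (hg : ContDiff ℝ (⊤ : ℕ∞) g) (i : Fin n) : ContDiff ℝ (⊤ : ℕ∞) (pd i g) := by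
  have h1 : ContDiff ℝ (⊤ : ℕ∞) (fderiv ℝ g) := hg.fderiv_right (by simp)
  exact (ContinuousLinearMap.apply ℝ ℝ (Pi.single i 1)).contDiff.comp h1

lemma pd_fun_mul (hf : DifferentiableAt ℝ f x) (hg : DifferentiableAt ℝ g x) (i : Fin n) :
    pd i (fun y => f y * g y) x = pd i f x * g x + f x * pd i g x := by
  unfold pd
  rw [fderiv_fun_mul hf hg]
  simp only [ContinuousLinearMap.add_apply, ContinuousLinearMap.smul_apply, smul_eq_mul]
  ring

lemma pd_fun_sum {ι : Type*} (s : Finset ι) (F : ι → (Fin n → ℝ) → ℝ)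
    (hF : ∀ j ∈ s, DifferentiableAt ℝ (F j) x) (i : Fin n) :
    pd i (fun y => ∑ j ∈ s, F j y) x = ∑ j ∈ s, pd i (F j) x := by
  unfold pd
  rw [fderiv_fun_sum hF]
  simp

lemma pd_pd_comm (hg : ContDiff ℝ (⊤ : ℕ∞) g) (i k : Fin n) :
    pd k (pd i g) x = pd i (pd k g) x := by
  have h1 : ContDiff ℝ (⊤ : ℕ∞) (fderiv ℝ g) := hg.fderiv_right (by simp)
  have hd : DifferentiableAt ℝ (fderiv ℝ g) x := (h1.differentiable (by simp)).differentiableAt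
  have key : ∀ j : Fin n, fderiv ℝ (pd j g) x
      = (ContinuousLinearMap.apply ℝ ℝ (Pi.single j 1)).comp (fderiv ℝ (fderiv ℝ g) x) := by
    intro j
    exact ((ContinuousLinearMap.apply ℝ ℝ (Pi.single j 1)).hasFDerivAt.comp x
      hd.hasFDerivAt).fderiv
  have hsymm : ∀ v w, fderiv ℝ (fderiv ℝ g) x v w = fderiv ℝ (fderiv ℝ g) x w v := fun v w =>
    second_derivative_symmetric (fun y => ((hg.differentiable (by simp)) y).hasFDerivAt)
      hd.hasFDerivAt v w
  show fderiv ℝ (pd i g) x (Pi.single k 1) = fderiv ℝ (pd k g) x (Pi.single i 1)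
  rw [key i, key k]
  exact hsymm (Pi.single k 1) (Pi.single i 1)

lemma pd_pb (hP : ∀ i j, ContDiff ℝ (⊤ : ℕ∞) (P i j)) (hg : ContDiff ℝ (⊤ : ℕ∞) g) (hh : ContDiff ℝ (⊤ : ℕ∞) h)
    (k : Fin n) :
    pd k (pb P g h) x = ∑ i : Fin n, ∑ j : Fin n,
      (pd k (P i j) x * pd i g x * pd j h x + P i j x * pd k (pd i g) x * pd j h x
        + P i j x * pd i g x * pd k (pd j h) x) := by
  have dP : ∀ i j, DifferentiableAt ℝ (P i j) x :=
    fun i j => ((hP i j).differentiable (by simp)).differentiableAt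
  have dg : ∀ i : Fin n, DifferentiableAt ℝ (pd i g) x :=
    fun i => ((contDiff_pd hg i).differentiable (by simp)).differentiableAt
  have dh : ∀ j : Fin n, DifferentiableAt ℝ (pd j h) x :=
    fun j => ((contDiff_pd hh j).differentiable (by simp)).differentiableAt
  have e1 : pb P g h = fun y => ∑ i : Fin n, ∑ j : Fin n, P i j y * pd i g y * pd j h y := rfl
  rw [e1]
  rw [pd_fun_sum Finset.univ _ (fun i _ =>
    DifferentiableAt.fun_sum (fun j _ => ((dP i j).fun_mul (dg i)).fun_mul (dh j))) k]
  refine Finset.sum_congr rfl (fun i _ => ?_)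
  rw [pd_fun_sum Finset.univ _ (fun j _ => ((dP i j).fun_mul (dg i)).fun_mul (dh j)) k]
  refine Finset.sum_congr rfl (fun j _ => ?_)
  rw [pd_fun_mul ((dP i j).fun_mul (dg i)) (dh j) k, pd_fun_mul (dP i j) (dg i) k]
  ring

abbrev Q4 (n : ℕ) := Fin n × Fin n × Fin n × Fin n

noncomputable def T1 (P : Fin n → Fin n → (Fin n → ℝ) → ℝ) (a b c : (Fin n → ℝ) → ℝ)
    (x : Fin n → ℝ) (p : Q4 n) : ℝ :=
  P p.1 p.2.1 x * pd p.1 a x *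
    (pd p.2.1 (P p.2.2.1 p.2.2.2) x * pd p.2.2.1 b x * pd p.2.2.2 c x)

noncomputable def T2 (P : Fin n → Fin n → (Fin n → ℝ) → ℝ) (a b c : (Fin n → ℝ) → ℝ)
    (x : Fin n → ℝ) (p : Q4 n) : ℝ :=
  P p.1 p.2.1 x * pd p.1 a x *
    (P p.2.2.1 p.2.2.2 x * pd p.2.1 (pd p.2.2.1 b) x * pd p.2.2.2 c x)

noncomputable def T3 (P : Fin n → Fin n → (Fin n → ℝ) → ℝ) (a b c : (Fin n → ℝ) → ℝ)
    (x : Fin n → ℝ) (p : Q4 n) : ℝ :=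
  P p.1 p.2.1 x * pd p.1 a x *
    (P p.2.2.1 p.2.2.2 x * pd p.2.2.1 b x * pd p.2.1 (pd p.2.2.2 c) x)

lemma sum4 (F : Fin n → Fin n → Fin n → Fin n → ℝ) :
    (∑ p : Q4 n, F p.1 p.2.1 p.2.2.1 p.2.2.2) = ∑ k, ∑ l, ∑ i, ∑ j, F k l i j := by
  simp [Fintype.sum_prod_type]

lemma pb_pb_eq (hP : ∀ i j, ContDiff ℝ (⊤ : ℕ∞) (P i j)) (hb : ContDiff ℝ (⊤ : ℕ∞) g) (hc : ContDiff ℝ (⊤ : ℕ∞) h) :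
    pb P f (pb P g h) x = ∑ p : Q4 n, (T1 P f g h x p + T2 P f g h x p + T3 P f g h x p) := by
  rw [sum4 (F := fun k l i j => T1 P f g h x (k,l,i,j) + T2 P f g h x (k,l,i,j)
    + T3 P f g h x (k,l,i,j))]
  show (∑ k, ∑ l, P k l x * pd k f x * pd l (pb P g h) x) = _
  refine Finset.sum_congr rfl (fun k _ => Finset.sum_congr rfl (fun l _ => ?_))
  rw [pd_pb hP hb hc l, Finset.mul_sum]
  refine Finset.sum_congr rfl (fun i _ => ?_)
  rw [Finset.mul_sum]
  refine Finset.sum_congr rfl (fun j _ => ?_)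
  simp only [T1, T2, T3]
  ring

def eqvA (n : ℕ) : Q4 n ≃ Q4 n where
  toFun p := (p.2.2.1, p.2.2.2, p.2.1, p.1)
  invFun q := (q.2.2.2, q.2.2.1, q.1, q.2.1)
  left_inv p := rfl
  right_inv q := rfl

def eqvB (n : ℕ) : Q4 n ≃ Q4 n where
  toFun p := (p.2.2.1, p.2.1, p.2.2.2, p.1)
  invFun q := (q.2.2.2, q.2.1, q.1, q.2.2.1)
  left_inv p := rfl
  right_inv q := rfl

def eqvC (n : ℕ) : Q4 n ≃ Q4 n where
  toFun p := (p.2.2.2, p.2.1, p.1, p.2.2.1)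
  invFun q := (q.2.2.1, q.2.1, q.2.2.2, q.1)
  left_inv p := rfl
  right_inv q := rfl

lemma pair_cancel (hanti : ∀ i j y, P i j y = -P j i y) (hb : ContDiff ℝ (⊤ : ℕ∞) g)
    (a c : (Fin n → ℝ) → ℝ) :
    (∑ p : Q4 n, T2 P a g c x p) + (∑ p : Q4 n, T3 P c a g x p) = 0 := by
  have key : ∀ p : Q4 n, T3 P c a g x p = -T2 P a g c x (eqvA n p) := by
    rintro ⟨k, l, i, j⟩
    simp only [T2, T3, eqvA, Equiv.coe_fn_mk]
    rw [hanti l k x, pd_pd_comm hb l j]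
    ring
  rw [Fintype.sum_equiv (eqvA n) (fun p => T3 P c a g x p)
    (fun p => -T2 P a g c x p) key]
  rw [Finset.sum_neg_distrib]
  ring

lemma dterm_cancel (hanti : ∀ i j y, P i j y = -P j i y)
    (hJ : ∀ i j k : Fin n, ∀ y, ∑ l : Fin n, (P l i y * pd l (P j k) y
      + P l j y * pd l (P k i) y + P l k y * pd l (P i j) y) = 0) :
    (∑ p : Q4 n, T1 P f g h x p) + (∑ p : Q4 n, T1 P g h f x p)
      + (∑ p : Q4 n, T1 P h f g x p) = 0 := by
  rw [← Fintype.sum_equiv (eqvB n) (fun p => T1 P g h f x (eqvB n p))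
    (fun p => T1 P g h f x p) (fun p => rfl)]
  rw [← Fintype.sum_equiv (eqvC n) (fun p => T1 P h f g x (eqvC n p))
    (fun p => T1 P h f g x p) (fun p => rfl)]
  rw [← Finset.sum_add_distrib, ← Finset.sum_add_distrib]
  rw [sum4 (F := fun k l i j => T1 P f g h x (k,l,i,j) + T1 P g h f x (eqvB n (k,l,i,j))
    + T1 P h f g x (eqvC n (k,l,i,j)))]
  refine Finset.sum_eq_zero fun k _ => ?_
  rw [Finset.sum_comm]
  refine Finset.sum_eq_zero fun i _ => ?_
  rw [Finset.sum_comm]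
  refine Finset.sum_eq_zero fun j _ => ?_
  have step : ∑ l : Fin n, (T1 P f g h x (k,l,i,j) + T1 P g h f x (eqvB n (k,l,i,j))
      + T1 P h f g x (eqvC n (k,l,i,j)))
      = (-(pd k f x * pd i g x * pd j h x)) * ∑ l : Fin n, (P l i x * pd l (P j k) x
        + P l j x * pd l (P k i) x + P l k x * pd l (P i j) x) := by
    rw [Finset.mul_sum]
    refine Finset.sum_congr rfl fun l _ => ?_
    simp only [T1, eqvB, eqvC, Equiv.coe_fn_mk]
    rw [hanti k l x, hanti i l x, hanti j l x]
    ring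
  rw [step, hJ i j k x, mul_zero]

theorem jacobi_general (hP : ∀ i j, ContDiff ℝ (⊤ : ℕ∞) (P i j))
    (hanti : ∀ i j y, P i j y = -P j i y)
    (hJ : ∀ i j k : Fin n, ∀ y, ∑ l : Fin n, (P l i y * pd l (P j k) y
      + P l j y * pd l (P k i) y + P l k y * pd l (P i j) y) = 0)
    (hf : ContDiff ℝ (⊤ : ℕ∞) f) (hg : ContDiff ℝ (⊤ : ℕ∞) g) (hh : ContDiff ℝ (⊤ : ℕ∞) h) :
    pb P f (pb P g h) x + pb P g (pb P h f) x + pb P h (pb P f g) x = 0 := by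
  rw [pb_pb_eq hP hg hh, pb_pb_eq hP hh hf, pb_pb_eq hP hf hg]
  rw [Finset.sum_add_distrib, Finset.sum_add_distrib, Finset.sum_add_distrib,
    Finset.sum_add_distrib, Finset.sum_add_distrib, Finset.sum_add_distrib]
  have d := dterm_cancel (f := f) (g := g) (h := h) (x := x) hanti hJ
  have p1 := pair_cancel (x := x) hanti hg f h
  have p2 := pair_cancel (x := x) hanti hh g f
  have p3 := pair_cancel (x := x) hanti hf h g
  linarith [d, p1, p2, p3]
end general


section infra
variable {n : ℕ} {x : Fin n → ℝ}

lemma contDiff_get (p : ℕ) : ContDiff ℝ (⊤ : ℕ∞) (fun y : Fin n → ℝ => get y p) := by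
  by_cases hp : p < n
  · have e : (fun y : Fin n → ℝ => get y p) = fun y => y ⟨p, hp⟩ :=
      funext fun y => dif_pos hp
    rw [e]
    exact (ContinuousLinearMap.proj (R := ℝ) (φ := fun _ : Fin n => ℝ) ⟨p, hp⟩).contDiff
  · have e : (fun y : Fin n → ℝ => get y p) = fun _ => (0:ℝ) :=
      funext fun y => dif_neg hp
    rw [e]
    exact contDiff_const


lemma pd_get (l : Fin n) (p : ℕ) :
    pd l (fun y => get y p) x = if p = (l : ℕ) then 1 else 0 := by
  by_cases hp : p < n
  · have e : (fun y : Fin n → ℝ => get y p) = fun y => y ⟨p, hp⟩ :=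
      funext fun y => dif_pos hp
    rw [e]
    show fderiv ℝ (fun y : Fin n → ℝ => y ⟨p, hp⟩) x (Pi.single l 1) = _
    have : (fun y : Fin n → ℝ => y ⟨p, hp⟩)
        = (ContinuousLinearMap.proj (R := ℝ) (φ := fun _ : Fin n => ℝ) ⟨p, hp⟩) := rfl
    rw [this, ContinuousLinearMap.fderiv]
    simp only [ContinuousLinearMap.proj_apply, Pi.single_apply]
    by_cases hpl : (⟨p, hp⟩ : Fin n) = l
    · rw [if_pos hpl, if_pos]
      exact congrArg Fin.val hpl
    · rw [if_neg hpl, if_neg]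
      intro hc
      exact hpl (Fin.ext hc)
  · have e : (fun y : Fin n → ℝ => get y p) = fun _ => (0:ℝ) :=
      funext fun y => dif_neg hp
    rw [e]
    show fderiv ℝ (fun _ : Fin n → ℝ => (0:ℝ)) x (Pi.single l 1) = _
    rw [fderiv_fun_const]
    have : ¬ p = (l : ℕ) := by
      intro hc; exact hp (hc ▸ l.isLt)
    simp [this]

lemma pd_zero_fun (l : Fin n) : pd l (fun _ => (0:ℝ)) x = 0 := by
  show fderiv ℝ (fun _ : Fin n → ℝ => (0:ℝ)) x (Pi.single l 1) = 0
  rw [fderiv_fun_const]; simp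

lemma pd_neg_fun (l : Fin n) (F : (Fin n → ℝ) → ℝ) :
    pd l (fun y => -(F y)) x = -pd l F x := by
  show fderiv ℝ (fun y => -(F y)) x (Pi.single l 1) = -(fderiv ℝ F x (Pi.single l 1))
  rw [fderiv_fun_neg]; simp

lemma pd_neg_mul_get (l : Fin n) (p q : ℕ) :
    pd l (fun y => -(get y p * get y q)) x
      = -((if p = (l:ℕ) then 1 else 0) * get x q + get x p * (if q = (l:ℕ) then 1 else 0)) := by
  rw [pd_neg_fun l (fun y => get y p * get y q)]
  have hp : DifferentiableAt ℝ (fun y : Fin n → ℝ => get y p) x :=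
    ((contDiff_get p).differentiable (by simp)).differentiableAt
  have hq : DifferentiableAt ℝ (fun y : Fin n → ℝ => get y q) x :=
    ((contDiff_get q).differentiable (by simp)).differentiableAt
  rw [pd_fun_mul hp hq l, pd_get l p, pd_get l q]

lemma sum_mul_delta (E : Fin n → ℝ) (p : ℕ) (hp : p < n) :
    (∑ l : Fin n, E l * (if p = (l:ℕ) then 1 else 0)) = E ⟨p, hp⟩ := by
  rw [Finset.sum_eq_single ⟨p, hp⟩]
  · simp
  · intro b _ hb
    rw [if_neg, mul_zero]
    intro hc; exact hb (Fin.ext hc.symm)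
  · intro hmem; exact absurd (Finset.mem_univ _) hmem

variable {m : ℕ}

lemma peFG_lt {a c : ℕ} (h : a + c < m + 1) :
    peFG m a c = fun y => -(get y a * get y ((m-1)+c)) :=
  funext fun _ => if_pos h

lemma peFG_ge {a c : ℕ} (h : ¬(a + c < m + 1)) :
    peFG m a c = fun y => -(get y (m-c) * get y ((m-1)+(m-a))) :=
  funext fun _ => if_neg h

lemma peFG_contDiff (a c : ℕ) : ContDiff ℝ (⊤ : ℕ∞) (peFG m a c) := by
  by_cases h : a + c < m + 1
  · rw [peFG_lt h]
    exact ((contDiff_get a).mul (contDiff_get ((m-1)+c))).neg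
  · rw [peFG_ge h]
    exact ((contDiff_get (m-c)).mul (contDiff_get ((m-1)+(m-a)))).neg

lemma Pe_FG {i k : Fin (2*m-1)} (h1 : 1 ≤ (i:ℕ)) (h2 : (i:ℕ) ≤ m-1) (h3 : m ≤ (k:ℕ)) :
    Pe m i k = peFG m (i:ℕ) ((k:ℕ)-(m-1)) := by
  funext y
  show (if _ then _ else _) = _
  rw [if_pos ⟨h1, h2, h3⟩]

lemma Pe_GF (hm : 2 ≤ m) {i k : Fin (2*m-1)} (h1 : 1 ≤ (i:ℕ)) (h2 : (i:ℕ) ≤ m-1)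
    (h3 : m ≤ (k:ℕ)) :
    Pe m k i = fun y => -(peFG m (i:ℕ) ((k:ℕ)-(m-1)) y) := by
  funext y
  show (if _ then _ else _) = _
  rw [if_neg (by omega : ¬(1 ≤ (k:ℕ) ∧ (k:ℕ) ≤ m-1 ∧ m ≤ (i:ℕ))), if_pos ⟨h1, h2, h3⟩]

lemma Pe_zero {i j : Fin (2*m-1)} (hij : ¬(1 ≤ (i:ℕ) ∧ (i:ℕ) ≤ m-1 ∧ m ≤ (j:ℕ)))
    (hji : ¬(1 ≤ (j:ℕ) ∧ (j:ℕ) ≤ m-1 ∧ m ≤ (i:ℕ))) :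
    Pe m i j = fun _ => (0:ℝ) := by
  funext y
  show (if _ then _ else _) = _
  rw [if_neg hij, if_neg hji]

lemma Pe_anti (hm : 2 ≤ m) (a b : Fin (2*m-1)) (y : Fin (2*m-1) → ℝ) :
    Pe m a b y = -Pe m b a y := by
  simp only [Pe]
  by_cases h1 : 1 ≤ (a:ℕ) ∧ (a:ℕ) ≤ m-1 ∧ m ≤ (b:ℕ)
  · rw [if_pos h1, if_neg (show ¬(1 ≤ (b:ℕ) ∧ (b:ℕ) ≤ m-1 ∧ m ≤ (a:ℕ)) by omega),
      if_pos h1]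
    ring
  · rw [if_neg h1]
    by_cases h2 : 1 ≤ (b:ℕ) ∧ (b:ℕ) ≤ m-1 ∧ m ≤ (a:ℕ)
    · rw [if_pos h2, if_pos h2]
    · rw [if_neg h2, if_neg h2, if_neg h1]
      exact neg_zero.symm

lemma Pe_contDiff (a b : Fin (2*m-1)) : ContDiff ℝ (⊤ : ℕ∞) (Pe m a b) := by
  by_cases h1 : 1 ≤ (a:ℕ) ∧ (a:ℕ) ≤ m-1 ∧ m ≤ (b:ℕ)
  · have e : Pe m a b = peFG m (a:ℕ) ((b:ℕ)-(m-1)) := by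
      funext y; show (if _ then _ else _) = _; rw [if_pos h1]
    rw [e]; exact peFG_contDiff _ _
  · by_cases h2 : 1 ≤ (b:ℕ) ∧ (b:ℕ) ≤ m-1 ∧ m ≤ (a:ℕ)
    · have e : Pe m a b = fun y => -(peFG m (b:ℕ) ((a:ℕ)-(m-1)) y) := by
        funext y; show (if _ then _ else _) = _; rw [if_neg h1, if_pos h2]
      rw [e]; exact (peFG_contDiff _ _).neg
    · have e : Pe m a b = fun _ => (0:ℝ) := Pe_zero h1 h2
      rw [e]; exact contDiff_const

noncomputable def Jx {n : ℕ} (P : Fin n → Fin n → (Fin n → ℝ) → ℝ) (i j k : Fin n)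
    (y : Fin n → ℝ) : ℝ :=
  ∑ l : Fin n, (P l i y * pd l (P j k) y + P l j y * pd l (P k i) y
    + P l k y * pd l (P i j) y)

lemma Jx_cyc {n : ℕ} (P : Fin n → Fin n → (Fin n → ℝ) → ℝ) (i j k : Fin n) (y : Fin n → ℝ) :
    Jx P i j k y = Jx P j k i y :=
  Finset.sum_congr rfl fun l _ => by ring

lemma sum_eval {n : ℕ} (E1 E2 : Fin n → ℝ) (u1 v1 u2 v2 : ℝ) (p1 q1 p2 q2 : ℕ)
    (hp1 : p1 < n) (hq1 : q1 < n) (hp2 : p2 < n) (hq2 : q2 < n) :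
    (∑ l : Fin n, (E1 l * (-((if p1 = (l:ℕ) then (1:ℝ) else 0) * u1
        + v1 * (if q1 = (l:ℕ) then 1 else 0)))
      + E2 l * ((if p2 = (l:ℕ) then (1:ℝ) else 0) * u2
        + v2 * (if q2 = (l:ℕ) then 1 else 0))))
    = -(E1 ⟨p1, hp1⟩ * u1 + v1 * E1 ⟨q1, hq1⟩)
      + (E2 ⟨p2, hp2⟩ * u2 + v2 * E2 ⟨q2, hq2⟩) := by
  have step : ∀ l : Fin n, (E1 l * (-((if p1 = (l:ℕ) then (1:ℝ) else 0) * u1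
        + v1 * (if q1 = (l:ℕ) then 1 else 0)))
      + E2 l * ((if p2 = (l:ℕ) then (1:ℝ) else 0) * u2
        + v2 * (if q2 = (l:ℕ) then 1 else 0)))
      = (-u1) * (E1 l * (if p1 = (l:ℕ) then 1 else 0))
        + (-v1) * (E1 l * (if q1 = (l:ℕ) then 1 else 0))
        + u2 * (E2 l * (if p2 = (l:ℕ) then 1 else 0))
        + v2 * (E2 l * (if q2 = (l:ℕ) then 1 else 0)) := fun l => by ring
  rw [Finset.sum_congr rfl (fun l _ => step l)]
  rw [Finset.sum_add_distrib, Finset.sum_add_distrib, Finset.sum_add_distrib,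
    ← Finset.mul_sum, ← Finset.mul_sum, ← Finset.mul_sum, ← Finset.mul_sum,
    sum_mul_delta E1 p1 hp1, sum_mul_delta E1 q1 hq1,
    sum_mul_delta E2 p2 hp2, sum_mul_delta E2 q2 hq2]
  ring

lemma peFG_lt_ap {a c : ℕ} (h : a + c < m + 1) (y : Fin (2*m-1) → ℝ) :
    peFG m a c y = -(get y a * get y ((m-1)+c)) := if_pos h

lemma peFG_ge_ap {a c : ℕ} (h : ¬(a + c < m + 1)) (y : Fin (2*m-1) → ℝ) :
    peFG m a c y = -(get y (m-c) * get y ((m-1)+(m-a))) := if_neg h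

lemma Pe_zero_ap {i j : Fin (2*m-1)} (hij : ¬(1 ≤ (i:ℕ) ∧ (i:ℕ) ≤ m-1 ∧ m ≤ (j:ℕ)))
    (hji : ¬(1 ≤ (j:ℕ) ∧ (j:ℕ) ≤ m-1 ∧ m ≤ (i:ℕ))) (y : Fin (2*m-1) → ℝ) :
    Pe m i j y = 0 := by rw [Pe_zero hij hji]

lemma Pe_FG_ap {i k : Fin (2*m-1)} (h1 : 1 ≤ (i:ℕ)) (h2 : (i:ℕ) ≤ m-1) (h3 : m ≤ (k:ℕ))
    (y : Fin (2*m-1) → ℝ) :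
    Pe m i k y = peFG m (i:ℕ) ((k:ℕ)-(m-1)) y := by rw [Pe_FG h1 h2 h3]

lemma Pe_GF_ap (hm : 2 ≤ m) {i k : Fin (2*m-1)} (h1 : 1 ≤ (i:ℕ)) (h2 : (i:ℕ) ≤ m-1)
    (h3 : m ≤ (k:ℕ)) (y : Fin (2*m-1) → ℝ) :
    Pe m k i y = -(peFG m (i:ℕ) ((k:ℕ)-(m-1)) y) := by rw [Pe_GF hm h1 h2 h3]

lemma Pe_FG_mk {k : Fin (2*m-1)} (h3 : m ≤ (k:ℕ)) (p : ℕ) (hp : p < 2*m-1)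
    (h1 : 1 ≤ p) (h2 : p ≤ m-1) (y : Fin (2*m-1) → ℝ) :
    Pe m ⟨p, hp⟩ k y = peFG m p ((k:ℕ)-(m-1)) y :=
  Pe_FG_ap h1 h2 h3 y

lemma Pe_GF_mk (hm : 2 ≤ m) {i : Fin (2*m-1)} (h1 : 1 ≤ (i:ℕ)) (h2 : (i:ℕ) ≤ m-1)
    (q : ℕ) (hq : q < 2*m-1) (h3 : m ≤ q) (y : Fin (2*m-1) → ℝ) :
    Pe m ⟨q, hq⟩ i y = -(peFG m (i:ℕ) (q-(m-1)) y) :=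
  Pe_GF_ap hm h1 h2 h3 y

lemma Pe_zero_mk {j : Fin (2*m-1)} (p : ℕ) (hp : p < 2*m-1)
    (h1 : ¬(1 ≤ p ∧ p ≤ m-1 ∧ m ≤ (j:ℕ))) (h2 : ¬(1 ≤ (j:ℕ) ∧ (j:ℕ) ≤ m-1 ∧ m ≤ p))
    (y : Fin (2*m-1) → ℝ) :
    Pe m ⟨p, hp⟩ j y = 0 :=
  Pe_zero_ap h1 h2 y

lemma J_FFG (hm : 2 ≤ m) {i j k : Fin (2*m-1)} (y : Fin (2*m-1) → ℝ)
    (hi1 : 1 ≤ (i:ℕ)) (hi2 : (i:ℕ) ≤ m-1) (hj1 : 1 ≤ (j:ℕ)) (hj2 : (j:ℕ) ≤ m-1)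
    (hk : m ≤ (k:ℕ)) : Jx (Pe m) i j k y = 0 := by
  have hkn : (k:ℕ) < 2*m-1 := k.isLt
  have e3 : Pe m i j = fun _ => (0:ℝ) := Pe_zero (by omega) (by omega)
  have e2 : Pe m k i = fun z => -(peFG m (i:ℕ) ((k:ℕ)-(m-1)) z) := Pe_GF hm hi1 hi2 hk
  have e1 : Pe m j k = peFG m (j:ℕ) ((k:ℕ)-(m-1)) := Pe_FG hj1 hj2 hk
  have hq1 : (m-1)+((k:ℕ)-(m-1)) = (k:ℕ) := by omega
  by_cases hbc : (j:ℕ) + ((k:ℕ)-(m-1)) < m + 1 <;>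
    by_cases hac : (i:ℕ) + ((k:ℕ)-(m-1)) < m + 1
  · -- both small
    have f1 : Pe m j k = fun z => -(get z (j:ℕ) * get z ((m-1)+((k:ℕ)-(m-1)))) := by
      rw [e1, peFG_lt hbc]
    have f2 : peFG m (i:ℕ) ((k:ℕ)-(m-1))
        = fun z => -(get z (i:ℕ) * get z ((m-1)+((k:ℕ)-(m-1)))) := peFG_lt hac
    calc Jx (Pe m) i j k y
        = ∑ l : Fin (2*m-1),
            ((fun l' => Pe m l' i y) l * (-((if (j:ℕ) = (l:ℕ) then (1:ℝ) else 0)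
                * get y ((m-1)+((k:ℕ)-(m-1)))
              + get y (j:ℕ) * (if (m-1)+((k:ℕ)-(m-1)) = (l:ℕ) then 1 else 0)))
            + (fun l' => Pe m l' j y) l * ((if (i:ℕ) = (l:ℕ) then (1:ℝ) else 0)
                * get y ((m-1)+((k:ℕ)-(m-1)))
              + get y (i:ℕ) * (if (m-1)+((k:ℕ)-(m-1)) = (l:ℕ) then 1 else 0))) := by
          refine Finset.sum_congr rfl fun l _ => ?_
          rw [f1, pd_neg_mul_get, e2, pd_neg_fun, f2, pd_neg_mul_get, e3, pd_zero_fun]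
          ring
      _ = _ := sum_eval _ _ _ _ _ _ _ _ _ _ (by omega) (by omega) (by omega) (by omega)
      _ = 0 := by
          simp only [hq1, Fin.eta]
          rw [Pe_zero_ap (i := j) (j := i) (by omega) (by omega) y,
            Pe_zero_ap (i := i) (j := j) (by omega) (by omega) y,
            Pe_GF_ap hm hi1 hi2 hk y, Pe_GF_ap hm hj1 hj2 hk y,
            peFG_lt_ap hac y, peFG_lt_ap hbc y]
          ring
  · -- hbc small, hac large
    have f1 : Pe m j k = fun z => -(get z (j:ℕ) * get z ((m-1)+((k:ℕ)-(m-1)))) := by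
      rw [e1, peFG_lt hbc]
    have f2 : peFG m (i:ℕ) ((k:ℕ)-(m-1))
        = fun z => -(get z (m-((k:ℕ)-(m-1))) * get z ((m-1)+(m-(i:ℕ)))) := peFG_ge hac
    calc Jx (Pe m) i j k y
        = ∑ l : Fin (2*m-1),
            ((fun l' => Pe m l' i y) l * (-((if (j:ℕ) = (l:ℕ) then (1:ℝ) else 0)
                * get y ((m-1)+((k:ℕ)-(m-1)))
              + get y (j:ℕ) * (if (m-1)+((k:ℕ)-(m-1)) = (l:ℕ) then 1 else 0)))
            + (fun l' => Pe m l' j y) l * ((if m-((k:ℕ)-(m-1)) = (l:ℕ) then (1:ℝ) else 0)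
                * get y ((m-1)+(m-(i:ℕ)))
              + get y (m-((k:ℕ)-(m-1))) * (if (m-1)+(m-(i:ℕ)) = (l:ℕ) then 1 else 0))) := by
          refine Finset.sum_congr rfl fun l _ => ?_
          rw [f1, pd_neg_mul_get, e2, pd_neg_fun, f2, pd_neg_mul_get, e3, pd_zero_fun]
          ring
      _ = _ := sum_eval _ _ _ _ _ _ _ _ _ _ (by omega) (by omega) (by omega) (by omega)
      _ = 0 := by
          simp only [hq1, Fin.eta]
          rw [Pe_zero_ap (i := j) (j := i) (by omega) (by omega) y,
            Pe_GF_ap hm hi1 hi2 hk y,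
            Pe_zero_mk (j := j) (m-((k:ℕ)-(m-1))) (by omega) (by omega) (by omega) y,
            Pe_GF_mk hm hj1 hj2 ((m-1)+(m-(i:ℕ))) (by omega) (by omega) y,
            peFG_ge_ap hac y]
          have hidx : (m-1)+(m-(i:ℕ))-(m-1) = m-(i:ℕ) := by omega
          rw [hidx, peFG_lt_ap (show (j:ℕ) + (m-(i:ℕ)) < m+1 by omega) y]
          ring
  · -- hbc large, hac small
    have f1 : Pe m j k = fun z => -(get z (m-((k:ℕ)-(m-1))) * get z ((m-1)+(m-(j:ℕ)))) := by
      rw [e1, peFG_ge hbc]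
    have f2 : peFG m (i:ℕ) ((k:ℕ)-(m-1))
        = fun z => -(get z (i:ℕ) * get z ((m-1)+((k:ℕ)-(m-1)))) := peFG_lt hac
    calc Jx (Pe m) i j k y
        = ∑ l : Fin (2*m-1),
            ((fun l' => Pe m l' i y) l * (-((if m-((k:ℕ)-(m-1)) = (l:ℕ) then (1:ℝ) else 0)
                * get y ((m-1)+(m-(j:ℕ)))
              + get y (m-((k:ℕ)-(m-1))) * (if (m-1)+(m-(j:ℕ)) = (l:ℕ) then 1 else 0)))
            + (fun l' => Pe m l' j y) l * ((if (i:ℕ) = (l:ℕ) then (1:ℝ) else 0)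
                * get y ((m-1)+((k:ℕ)-(m-1)))
              + get y (i:ℕ) * (if (m-1)+((k:ℕ)-(m-1)) = (l:ℕ) then 1 else 0))) := by
          refine Finset.sum_congr rfl fun l _ => ?_
          rw [f1, pd_neg_mul_get, e2, pd_neg_fun, f2, pd_neg_mul_get, e3, pd_zero_fun]
          ring
      _ = _ := sum_eval _ _ _ _ _ _ _ _ _ _ (by omega) (by omega) (by omega) (by omega)
      _ = 0 := by
          simp only [hq1, Fin.eta]
          rw [Pe_zero_mk (j := i) (m-((k:ℕ)-(m-1))) (by omega) (by omega) (by omega) y,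
            Pe_GF_mk hm hi1 hi2 ((m-1)+(m-(j:ℕ))) (by omega) (by omega) y,
            Pe_zero_ap (i := i) (j := j) (by omega) (by omega) y,
            Pe_GF_ap hm hj1 hj2 hk y,
            peFG_ge_ap hbc y]
          have hidx : (m-1)+(m-(j:ℕ))-(m-1) = m-(j:ℕ) := by omega
          rw [hidx, peFG_lt_ap (show (i:ℕ) + (m-(j:ℕ)) < m+1 by omega) y]
          ring
  · -- both large
    have f1 : Pe m j k = fun z => -(get z (m-((k:ℕ)-(m-1))) * get z ((m-1)+(m-(j:ℕ)))) := by
      rw [e1, peFG_ge hbc]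
    have f2 : peFG m (i:ℕ) ((k:ℕ)-(m-1))
        = fun z => -(get z (m-((k:ℕ)-(m-1))) * get z ((m-1)+(m-(i:ℕ)))) := peFG_ge hac
    calc Jx (Pe m) i j k y
        = ∑ l : Fin (2*m-1),
            ((fun l' => Pe m l' i y) l * (-((if m-((k:ℕ)-(m-1)) = (l:ℕ) then (1:ℝ) else 0)
                * get y ((m-1)+(m-(j:ℕ)))
              + get y (m-((k:ℕ)-(m-1))) * (if (m-1)+(m-(j:ℕ)) = (l:ℕ) then 1 else 0)))
            + (fun l' => Pe m l' j y) l * ((if m-((k:ℕ)-(m-1)) = (l:ℕ) then (1:ℝ) else 0)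
                * get y ((m-1)+(m-(i:ℕ)))
              + get y (m-((k:ℕ)-(m-1))) * (if (m-1)+(m-(i:ℕ)) = (l:ℕ) then 1 else 0))) := by
          refine Finset.sum_congr rfl fun l _ => ?_
          rw [f1, pd_neg_mul_get, e2, pd_neg_fun, f2, pd_neg_mul_get, e3, pd_zero_fun]
          ring
      _ = _ := sum_eval _ _ _ _ _ _ _ _ _ _ (by omega) (by omega) (by omega) (by omega)
      _ = 0 := by
          rw [Pe_zero_mk (j := i) (m-((k:ℕ)-(m-1))) (by omega) (by omega) (by omega) y,
            Pe_GF_mk hm hi1 hi2 ((m-1)+(m-(j:ℕ))) (by omega) (by omega) y,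
            Pe_zero_mk (j := j) (m-((k:ℕ)-(m-1))) (by omega) (by omega) (by omega) y,
            Pe_GF_mk hm hj1 hj2 ((m-1)+(m-(i:ℕ))) (by omega) (by omega) y]
          have hidx1 : (m-1)+(m-(j:ℕ))-(m-1) = m-(j:ℕ) := by omega
          have hidx2 : (m-1)+(m-(i:ℕ))-(m-1) = m-(i:ℕ) := by omega
          rw [hidx1, hidx2]
          rcases Nat.lt_trichotomy (i:ℕ) (j:ℕ) with hab | hab | hab
          · rw [peFG_lt_ap (show (i:ℕ) + (m-(j:ℕ)) < m+1 by omega) y,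
              peFG_ge_ap (show ¬((j:ℕ) + (m-(i:ℕ)) < m+1) by omega) y]
            have h3 : m-(m-(i:ℕ)) = (i:ℕ) := by omega
            rw [h3]
            ring
          · rw [peFG_lt_ap (show (i:ℕ) + (m-(j:ℕ)) < m+1 by omega) y,
              peFG_lt_ap (show (j:ℕ) + (m-(i:ℕ)) < m+1 by omega) y]
            rw [hab]
            ring
          · rw [peFG_ge_ap (show ¬((i:ℕ) + (m-(j:ℕ)) < m+1) by omega) y,
              peFG_lt_ap (show (j:ℕ) + (m-(i:ℕ)) < m+1 by omega) y]
            have h3 : m-(m-(j:ℕ)) = (j:ℕ) := by omega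
            rw [h3]
            ring

lemma J_FGG (hm : 2 ≤ m) {i j k : Fin (2*m-1)} (y : Fin (2*m-1) → ℝ)
    (hi1 : 1 ≤ (i:ℕ)) (hi2 : (i:ℕ) ≤ m-1) (hj : m ≤ (j:ℕ)) (hk : m ≤ (k:ℕ)) :
    Jx (Pe m) i j k y = 0 := by
  have hkn : (k:ℕ) < 2*m-1 := k.isLt
  have hjn : (j:ℕ) < 2*m-1 := j.isLt
  have e1 : Pe m j k = fun _ => (0:ℝ) := Pe_zero (by omega) (by omega)
  have e2 : Pe m k i = fun z => -(peFG m (i:ℕ) ((k:ℕ)-(m-1)) z) := Pe_GF hm hi1 hi2 hk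
  have e3 : Pe m i j = peFG m (i:ℕ) ((j:ℕ)-(m-1)) := Pe_FG hi1 hi2 hj
  have hqb : (m-1)+((j:ℕ)-(m-1)) = (j:ℕ) := by omega
  have hqc : (m-1)+((k:ℕ)-(m-1)) = (k:ℕ) := by omega
  by_cases hab : (i:ℕ) + ((j:ℕ)-(m-1)) < m + 1 <;>
    by_cases hac : (i:ℕ) + ((k:ℕ)-(m-1)) < m + 1
  · -- both small
    have f3 : Pe m i j = fun z => -(get z (i:ℕ) * get z ((m-1)+((j:ℕ)-(m-1)))) := by
      rw [e3, peFG_lt hab]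
    have f2 : peFG m (i:ℕ) ((k:ℕ)-(m-1))
        = fun z => -(get z (i:ℕ) * get z ((m-1)+((k:ℕ)-(m-1)))) := peFG_lt hac
    calc Jx (Pe m) i j k y
        = ∑ l : Fin (2*m-1),
            ((fun l' => Pe m l' k y) l * (-((if (i:ℕ) = (l:ℕ) then (1:ℝ) else 0)
                * get y ((m-1)+((j:ℕ)-(m-1)))
              + get y (i:ℕ) * (if (m-1)+((j:ℕ)-(m-1)) = (l:ℕ) then 1 else 0)))
            + (fun l' => Pe m l' j y) l * ((if (i:ℕ) = (l:ℕ) then (1:ℝ) else 0)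
                * get y ((m-1)+((k:ℕ)-(m-1)))
              + get y (i:ℕ) * (if (m-1)+((k:ℕ)-(m-1)) = (l:ℕ) then 1 else 0))) := by
          refine Finset.sum_congr rfl fun l _ => ?_
          rw [e1, pd_zero_fun, e2, pd_neg_fun, f2, pd_neg_mul_get, f3, pd_neg_mul_get]
          ring
      _ = _ := sum_eval _ _ _ _ _ _ _ _ _ _ (by omega) (by omega) (by omega) (by omega)
      _ = 0 := by
          simp only [hqb, hqc, Fin.eta]
          rw [Pe_FG_ap hi1 hi2 hk y, peFG_lt_ap hac y,
            Pe_zero_ap (i := j) (j := k) (by omega) (by omega) y,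
            Pe_FG_ap hi1 hi2 hj y, peFG_lt_ap hab y,
            Pe_zero_ap (i := k) (j := j) (by omega) (by omega) y]
          simp only [hqb, hqc]
          ring
  · -- hab small, hac large
    have f3 : Pe m i j = fun z => -(get z (i:ℕ) * get z ((m-1)+((j:ℕ)-(m-1)))) := by
      rw [e3, peFG_lt hab]
    have f2 : peFG m (i:ℕ) ((k:ℕ)-(m-1))
        = fun z => -(get z (m-((k:ℕ)-(m-1))) * get z ((m-1)+(m-(i:ℕ)))) := peFG_ge hac
    calc Jx (Pe m) i j k y
        = ∑ l : Fin (2*m-1),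
            ((fun l' => Pe m l' k y) l * (-((if (i:ℕ) = (l:ℕ) then (1:ℝ) else 0)
                * get y ((m-1)+((j:ℕ)-(m-1)))
              + get y (i:ℕ) * (if (m-1)+((j:ℕ)-(m-1)) = (l:ℕ) then 1 else 0)))
            + (fun l' => Pe m l' j y) l * ((if m-((k:ℕ)-(m-1)) = (l:ℕ) then (1:ℝ) else 0)
                * get y ((m-1)+(m-(i:ℕ)))
              + get y (m-((k:ℕ)-(m-1))) * (if (m-1)+(m-(i:ℕ)) = (l:ℕ) then 1 else 0))) := by
          refine Finset.sum_congr rfl fun l _ => ?_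
          rw [e1, pd_zero_fun, e2, pd_neg_fun, f2, pd_neg_mul_get, f3, pd_neg_mul_get]
          ring
      _ = _ := sum_eval _ _ _ _ _ _ _ _ _ _ (by omega) (by omega) (by omega) (by omega)
      _ = 0 := by
          simp only [hqb, hqc, Fin.eta]
          rw [Pe_FG_ap hi1 hi2 hk y, peFG_ge_ap hac y,
            Pe_zero_ap (i := j) (j := k) (by omega) (by omega) y,
            Pe_FG_mk hj (m-((k:ℕ)-(m-1))) (by omega) (by omega) (by omega) y,
            peFG_lt_ap (show m-((k:ℕ)-(m-1)) + ((j:ℕ)-(m-1)) < m+1 by omega) y,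
            Pe_zero_mk (j := j) ((m-1)+(m-(i:ℕ))) (by omega) (by omega) (by omega) y]
          simp only [hqb, hqc]
          ring
  · -- hab large, hac small
    have f3 : Pe m i j = fun z => -(get z (m-((j:ℕ)-(m-1))) * get z ((m-1)+(m-(i:ℕ)))) := by
      rw [e3, peFG_ge hab]
    have f2 : peFG m (i:ℕ) ((k:ℕ)-(m-1))
        = fun z => -(get z (i:ℕ) * get z ((m-1)+((k:ℕ)-(m-1)))) := peFG_lt hac
    calc Jx (Pe m) i j k y
        = ∑ l : Fin (2*m-1),
            ((fun l' => Pe m l' k y) l * (-((if m-((j:ℕ)-(m-1)) = (l:ℕ) then (1:ℝ) else 0)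
                * get y ((m-1)+(m-(i:ℕ)))
              + get y (m-((j:ℕ)-(m-1))) * (if (m-1)+(m-(i:ℕ)) = (l:ℕ) then 1 else 0)))
            + (fun l' => Pe m l' j y) l * ((if (i:ℕ) = (l:ℕ) then (1:ℝ) else 0)
                * get y ((m-1)+((k:ℕ)-(m-1)))
              + get y (i:ℕ) * (if (m-1)+((k:ℕ)-(m-1)) = (l:ℕ) then 1 else 0))) := by
          refine Finset.sum_congr rfl fun l _ => ?_
          rw [e1, pd_zero_fun, e2, pd_neg_fun, f2, pd_neg_mul_get, f3, pd_neg_mul_get]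
          ring
      _ = _ := sum_eval _ _ _ _ _ _ _ _ _ _ (by omega) (by omega) (by omega) (by omega)
      _ = 0 := by
          simp only [hqb, hqc, Fin.eta]
          rw [Pe_FG_mk hk (m-((j:ℕ)-(m-1))) (by omega) (by omega) (by omega) y,
            peFG_lt_ap (show m-((j:ℕ)-(m-1)) + ((k:ℕ)-(m-1)) < m+1 by omega) y,
            Pe_zero_mk (j := k) ((m-1)+(m-(i:ℕ))) (by omega) (by omega) (by omega) y,
            Pe_FG_ap hi1 hi2 hj y, peFG_ge_ap hab y,
            Pe_zero_ap (i := k) (j := j) (by omega) (by omega) y]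
          simp only [hqb, hqc]
          ring
  · -- both large
    have f3 : Pe m i j = fun z => -(get z (m-((j:ℕ)-(m-1))) * get z ((m-1)+(m-(i:ℕ)))) := by
      rw [e3, peFG_ge hab]
    have f2 : peFG m (i:ℕ) ((k:ℕ)-(m-1))
        = fun z => -(get z (m-((k:ℕ)-(m-1))) * get z ((m-1)+(m-(i:ℕ)))) := peFG_ge hac
    calc Jx (Pe m) i j k y
        = ∑ l : Fin (2*m-1),
            ((fun l' => Pe m l' k y) l * (-((if m-((j:ℕ)-(m-1)) = (l:ℕ) then (1:ℝ) else 0)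
                * get y ((m-1)+(m-(i:ℕ)))
              + get y (m-((j:ℕ)-(m-1))) * (if (m-1)+(m-(i:ℕ)) = (l:ℕ) then 1 else 0)))
            + (fun l' => Pe m l' j y) l * ((if m-((k:ℕ)-(m-1)) = (l:ℕ) then (1:ℝ) else 0)
                * get y ((m-1)+(m-(i:ℕ)))
              + get y (m-((k:ℕ)-(m-1))) * (if (m-1)+(m-(i:ℕ)) = (l:ℕ) then 1 else 0))) := by
          refine Finset.sum_congr rfl fun l _ => ?_
          rw [e1, pd_zero_fun, e2, pd_neg_fun, f2, pd_neg_mul_get, f3, pd_neg_mul_get]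
          ring
      _ = _ := sum_eval _ _ _ _ _ _ _ _ _ _ (by omega) (by omega) (by omega) (by omega)
      _ = 0 := by
          rw [Pe_FG_mk hk (m-((j:ℕ)-(m-1))) (by omega) (by omega) (by omega) y,
            Pe_zero_mk (j := k) ((m-1)+(m-(i:ℕ))) (by omega) (by omega) (by omega) y,
            Pe_FG_mk hj (m-((k:ℕ)-(m-1))) (by omega) (by omega) (by omega) y,
            Pe_zero_mk (j := j) ((m-1)+(m-(i:ℕ))) (by omega) (by omega) (by omega) y]
          rcases Nat.lt_trichotomy ((j:ℕ)-(m-1)) ((k:ℕ)-(m-1)) with hbc | hbc | hbc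
          · rw [peFG_ge_ap (show ¬(m-((j:ℕ)-(m-1)) + ((k:ℕ)-(m-1)) < m+1) by omega) y,
              peFG_lt_ap (show m-((k:ℕ)-(m-1)) + ((j:ℕ)-(m-1)) < m+1 by omega) y]
            have h3 : m-(m-((j:ℕ)-(m-1))) = (j:ℕ)-(m-1) := by omega
            rw [h3]
            ring
          · rw [peFG_lt_ap (show m-((j:ℕ)-(m-1)) + ((k:ℕ)-(m-1)) < m+1 by omega) y,
              peFG_lt_ap (show m-((k:ℕ)-(m-1)) + ((j:ℕ)-(m-1)) < m+1 by omega) y]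
            rw [hbc]
            ring
          · rw [peFG_lt_ap (show m-((j:ℕ)-(m-1)) + ((k:ℕ)-(m-1)) < m+1 by omega) y,
              peFG_ge_ap (show ¬(m-((k:ℕ)-(m-1)) + ((j:ℕ)-(m-1)) < m+1) by omega) y]
            have h3 : m-(m-((k:ℕ)-(m-1))) = (k:ℕ)-(m-1) := by omega
            rw [h3]
            ring


lemma J0 (hm : 2 ≤ m) {i j k : Fin (2*m-1)} (hk0 : (k:ℕ) = 0) (y : Fin (2*m-1) → ℝ) :
    Jx (Pe m) i j k y = 0 :=
  Finset.sum_eq_zero fun l _ => by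
    rw [show Pe m j k = fun _ => (0:ℝ) from Pe_zero (by omega) (by omega),
      show Pe m k i = fun _ => (0:ℝ) from Pe_zero (by omega) (by omega)]
    simp only [pd_zero_fun]
    rw [Pe_zero_ap (i := l) (j := k) (by omega) (by omega) y]
    ring

lemma Jzero3 {n : ℕ} {P : Fin n → Fin n → (Fin n → ℝ) → ℝ} {i j k : Fin n} {y : Fin n → ℝ}
    (h1 : P j k = fun _ => (0:ℝ)) (h2 : P k i = fun _ => (0:ℝ))
    (h3 : P i j = fun _ => (0:ℝ)) : Jx P i j k y = 0 :=
  Finset.sum_eq_zero fun l _ => by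
    rw [h1, h2, h3]
    simp only [pd_zero_fun]
    ring

lemma Jx_Pe (hm : 2 ≤ m) (i j k : Fin (2*m-1)) (y : Fin (2*m-1) → ℝ) :
    Jx (Pe m) i j k y = 0 := by
  have tri : ∀ t : Fin (2*m-1), (t:ℕ) = 0 ∨ (1 ≤ (t:ℕ) ∧ (t:ℕ) ≤ m-1) ∨ (m ≤ (t:ℕ)) :=
    fun t => by have := t.isLt; omega
  rcases tri i with hi | hi | hi <;> rcases tri j with hj | hj | hj <;>
    rcases tri k with hk | hk | hk <;>
  first
  | exact J0 hm hk y
  | (rw [Jx_cyc]; exact J0 hm hi y)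
  | (rw [Jx_cyc, Jx_cyc]; exact J0 hm hj y)
  | exact Jzero3 (Pe_zero (by omega) (by omega)) (Pe_zero (by omega) (by omega))
      (Pe_zero (by omega) (by omega))
  | exact J_FFG hm y hi.1 hi.2 hj.1 hj.2 hk
  | (rw [Jx_cyc]; exact J_FFG hm y hj.1 hj.2 hk.1 hk.2 hi)
  | (rw [Jx_cyc, Jx_cyc]; exact J_FFG hm y hk.1 hk.2 hi.1 hi.2 hj)
  | exact J_FGG hm y hi.1 hi.2 hj hk
  | (rw [Jx_cyc]; exact J_FGG hm y hj.1 hj.2 hk hi)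
  | (rw [Jx_cyc, Jx_cyc]; exact J_FGG hm y hk.1 hk.2 hi hj)

/-- The even-case bracket on `F(H, F_1,…,F_{m-1}, G_1,…,G_{m-1})` satisfies the
Jacobi identity. -/
theorem even_algebra_jacobi (m : ℕ) (hm : 2 ≤ m)
    (f g h : (Fin (2*m-1) → ℝ) → ℝ)
    (hf : ContDiff ℝ (⊤ : ℕ∞) f) (hg : ContDiff ℝ (⊤ : ℕ∞) g) (hh : ContDiff ℝ (⊤ : ℕ∞) h)
    (y : Fin (2*m-1) → ℝ) :
    pb (Pe m) f (pb (Pe m) g h) y + pb (Pe m) g (pb (Pe m) h f) y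
      + pb (Pe m) h (pb (Pe m) f g) y = 0 := by
  exact jacobi_general (fun a b => Pe_contDiff a b) (fun a b z => Pe_anti hm a b z)
    (fun a b c z => Jx_Pe hm a b c z) hf hg hh
end infra
end

section
/- In the even-case abstract Poisson algebra (generators F_i, G_j, 1 ≤ i,j ≤ m−1, with {F_i,F_j}={G_i,G_j}=0 and {F_i,G_j} = −F_iG_j if κ(i,j)<0, −F_{m-j}G_{m-i} if κ(i,j)≥0 where κ(i,j)=i+j−m−1), one has {F_i,{F_j,G_k}} = −F_i{F_j,G_k} when i ≤ j and {F_i,{F_j,G_k}} = −F_j{F_i,G_k} when j ≤ i; consequently the Jacobi identity holds for every triple (F_i, F_j, G_k). -/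
/-- `F_i` and `G_j` as coordinate functions. -/
noncomputable def Fc (m i : ℕ) : (Fin (2*m-1) → ℝ) → ℝ := fun y => get y i
noncomputable def Gc (m j : ℕ) : (Fin (2*m-1) → ℝ) → ℝ := fun y => get y ((m-1)+j)

section helpers

lemma coord_eq' {n : ℕ} (c : Fin n) :
    (fun y : Fin n → ℝ => y c) = (ContinuousLinearMap.proj c : (Fin n → ℝ) →L[ℝ] ℝ) := rfl

lemma pd_coord {n : ℕ} (c d : Fin n) (x : Fin n → ℝ) :
    pd d (fun y => y c) x = if c = d then 1 else 0 := by
  unfold pd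
  rw [coord_eq', ContinuousLinearMap.fderiv]
  simp [Pi.single_apply]

lemma pd_mul {n : ℕ} (c1 c2 d : Fin n) (x : Fin n → ℝ) :
    pd d (fun y => y c1 * y c2) x
      = (if c1 = d then 1 else 0) * x c2 + x c1 * (if c2 = d then 1 else 0) := by
  unfold pd
  have h1 : DifferentiableAt ℝ (fun y : Fin n → ℝ => y c1) x := by
    rw [coord_eq']; exact (ContinuousLinearMap.proj c1 : (Fin n → ℝ) →L[ℝ] ℝ).differentiableAt
  have h2 : DifferentiableAt ℝ (fun y : Fin n → ℝ => y c2) x := by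
    rw [coord_eq']; exact (ContinuousLinearMap.proj c2 : (Fin n → ℝ) →L[ℝ] ℝ).differentiableAt
  rw [fderiv_fun_mul h1 h2]
  have e1 : fderiv ℝ (fun y : Fin n → ℝ => y c1) x = ContinuousLinearMap.proj c1 := by
    rw [coord_eq', ContinuousLinearMap.fderiv]
  have e2 : fderiv ℝ (fun y : Fin n → ℝ => y c2) x = ContinuousLinearMap.proj c2 := by
    rw [coord_eq', ContinuousLinearMap.fderiv]
  simp [e1, e2, Pi.single_apply]
  ring

lemma pd_neg {n : ℕ} (d : Fin n) (f : (Fin n → ℝ) → ℝ) (x : Fin n → ℝ) :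
    pd d (fun y => -(f y)) x = -(pd d f x) := by
  unfold pd; rw [fderiv_fun_neg]; simp

lemma pd_zero {n : ℕ} (d : Fin n) (x : Fin n → ℝ) :
    pd d (fun _ => (0:ℝ)) x = 0 := by
  unfold pd; simp

lemma pb_left_coord {n : ℕ} (P : Fin n → Fin n → (Fin n → ℝ) → ℝ) (c : Fin n)
    (f : (Fin n → ℝ) → ℝ) (y : Fin n → ℝ) :
    pb P (fun x => x c) f y = ∑ d : Fin n, P c d y * pd d f y := by
  unfold pb
  simp [pd_coord, mul_ite, ite_mul, Finset.sum_ite_eq, Finset.sum_ite_eq']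

lemma pb_coord_coord {n : ℕ} (P : Fin n → Fin n → (Fin n → ℝ) → ℝ) (c d : Fin n)
    (y : Fin n → ℝ) :
    pb P (fun x => x c) (fun x => x d) y = P c d y := by
  rw [pb_left_coord]
  simp [pd_coord, mul_ite, Finset.sum_ite_eq]

lemma pb_neg_right {n : ℕ} (P : Fin n → Fin n → (Fin n → ℝ) → ℝ)
    (g h : (Fin n → ℝ) → ℝ) (y : Fin n → ℝ) :
    pb P g (fun x => -(h x)) y = -(pb P g h y) := by
  unfold pb
  simp [pd_neg, mul_neg, Finset.sum_neg_distrib]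

lemma pb_zero_right {n : ℕ} (P : Fin n → Fin n → (Fin n → ℝ) → ℝ)
    (g : (Fin n → ℝ) → ℝ) (y : Fin n → ℝ) :
    pb P g (fun _ => (0:ℝ)) y = 0 := by
  unfold pb
  simp [pd_zero]

lemma pb_coord_mul {n : ℕ} (P : Fin n → Fin n → (Fin n → ℝ) → ℝ) (c c1 c2 : Fin n)
    (y : Fin n → ℝ) :
    pb P (fun x => x c) (fun x => x c1 * x c2) y
      = P c c1 y * y c2 + P c c2 y * y c1 := by
  rw [pb_left_coord]
  simp only [pd_mul]
  simp [mul_add, mul_ite, ite_mul, mul_comm, mul_assoc, Finset.sum_add_distrib,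
    Finset.sum_ite_eq, Finset.sum_ite_eq']

lemma get_lt {n : ℕ} (y : Fin n → ℝ) (i : ℕ) (h : i < n) : get y i = y ⟨i, h⟩ := dif_pos h

lemma Fc_coord (m i : ℕ) (h : i < 2*m-1) : Fc m i = fun x => x ⟨i, h⟩ := by
  funext x; exact get_lt x i h

lemma Gc_coord (m j : ℕ) (h : (m-1)+j < 2*m-1) : Gc m j = fun x => x ⟨(m-1)+j, h⟩ := by
  funext x; exact get_lt x _ h

lemma Pe_FF (m a b : ℕ) (ham : a ≤ m-1) (hbm : b ≤ m-1) (hm : 2 ≤ m)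
    (ha : a < 2*m-1) (hb : b < 2*m-1) (y : Fin (2*m-1) → ℝ) :
    Pe m ⟨a, ha⟩ ⟨b, hb⟩ y = 0 := by
  have hva : ((⟨a, ha⟩ : Fin (2*m-1)) : ℕ) = a := rfl
  have hvb : ((⟨b, hb⟩ : Fin (2*m-1)) : ℕ) = b := rfl
  unfold Pe
  rw [if_neg (by rw [hva, hvb]; omega), if_neg (by rw [hva, hvb]; omega)]

lemma Pe_FG_s13 (m a b : ℕ) (hm : 2 ≤ m) (ha1 : 1 ≤ a) (ham : a ≤ m-1) (hb1 : 1 ≤ b)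
    (ha : a < 2*m-1) (hb : (m-1)+b < 2*m-1) (y : Fin (2*m-1) → ℝ) :
    Pe m ⟨a, ha⟩ ⟨(m-1)+b, hb⟩ y = peFG m a b y := by
  have hva : ((⟨a, ha⟩ : Fin (2*m-1)) : ℕ) = a := rfl
  have hvb : ((⟨(m-1)+b, hb⟩ : Fin (2*m-1)) : ℕ) = (m-1)+b := rfl
  unfold Pe
  rw [if_pos (by rw [hva, hvb]; omega)]
  rw [hva, hvb]
  have : (m-1)+b-(m-1) = b := by omega
  rw [this]

lemma Pe_GF_s13 (m a b : ℕ) (hm : 2 ≤ m) (ha1 : 1 ≤ a) (ham : a ≤ m-1) (hb1 : 1 ≤ b)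
    (ha : a < 2*m-1) (hb : (m-1)+b < 2*m-1) (y : Fin (2*m-1) → ℝ) :
    Pe m ⟨(m-1)+b, hb⟩ ⟨a, ha⟩ y = -(peFG m a b y) := by
  have hva : ((⟨a, ha⟩ : Fin (2*m-1)) : ℕ) = a := rfl
  have hvb : ((⟨(m-1)+b, hb⟩ : Fin (2*m-1)) : ℕ) = (m-1)+b := rfl
  unfold Pe
  rw [if_neg (by rw [hva, hvb]; omega), if_pos (by rw [hva, hvb]; omega)]
  rw [hva, hvb]
  have : (m-1)+b-(m-1) = b := by omega
  rw [this]

lemma pb_FG (m i j : ℕ) (hm : 2 ≤ m) (hi1 : 1 ≤ i) (him : i ≤ m-1) (hj1 : 1 ≤ j)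
    (hjm : j ≤ m-1) :
    pb (Pe m) (Fc m i) (Gc m j) = peFG m i j := by
  have hi : i < 2*m-1 := by omega
  have hj : (m-1)+j < 2*m-1 := by omega
  funext y
  rw [Fc_coord m i hi, Gc_coord m j hj, pb_coord_coord, Pe_FG_s13 m i j hm hi1 him hj1 hi hj]

lemma pb_GF (m i j : ℕ) (hm : 2 ≤ m) (hi1 : 1 ≤ i) (him : i ≤ m-1) (hj1 : 1 ≤ j)
    (hjm : j ≤ m-1) :
    pb (Pe m) (Gc m j) (Fc m i) = fun y => -(peFG m i j y) := by
  have hi : i < 2*m-1 := by omega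
  have hj : (m-1)+j < 2*m-1 := by omega
  funext y
  rw [Fc_coord m i hi, Gc_coord m j hj, pb_coord_coord, Pe_GF_s13 m i j hm hi1 him hj1 hi hj]

lemma pb_FF (m i j : ℕ) (hm : 2 ≤ m) (him : i ≤ m-1) (hjm : j ≤ m-1) :
    pb (Pe m) (Fc m i) (Fc m j) = fun _ => (0:ℝ) := by
  have hi : i < 2*m-1 := by omega
  have hj : j < 2*m-1 := by omega
  funext y
  rw [Fc_coord m i hi, Fc_coord m j hj, pb_coord_coord, Pe_FF m i j him hjm hm hi hj]

lemma pb_F_mul (m : ℕ) (hm : 2 ≤ m) (i a b : ℕ)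
    (hi1 : 1 ≤ i) (him : i ≤ m-1) (ha1 : 1 ≤ a) (ham : a ≤ m-1) (hb1 : 1 ≤ b)
    (hbm : b ≤ m-1) (y : Fin (2*m-1) → ℝ) :
    pb (Pe m) (Fc m i) (fun x => -(get x a * get x ((m-1)+b))) y
      = -(peFG m i b y * get y a) := by
  have hilt : i < 2*m-1 := by omega
  have halt : a < 2*m-1 := by omega
  have hblt : (m-1)+b < 2*m-1 := by omega
  rw [Fc_coord m i hilt]
  have hfun : (fun x : Fin (2*m-1) → ℝ => -(get x a * get x ((m-1)+b)))
      = fun x => -((fun z : Fin (2*m-1) → ℝ => z ⟨a, halt⟩ * z ⟨(m-1)+b, hblt⟩) x) := by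
    funext x; rw [get_lt x a halt, get_lt x _ hblt]
  rw [hfun, pb_neg_right, pb_coord_mul,
    Pe_FF m i a him ham hm hilt halt, Pe_FG_s13 m i b hm hi1 him hb1 hilt hblt,
    get_lt y a halt]
  ring

lemma clause1 (m : ℕ) (hm : 2 ≤ m) (i j k : ℕ)
    (hi1 : 1 ≤ i) (him : i ≤ m-1) (hj1 : 1 ≤ j) (hjm : j ≤ m-1)
    (hk1 : 1 ≤ k) (hkm : k ≤ m-1) (hij : i ≤ j) (y : Fin (2*m-1) → ℝ) :
    pb (Pe m) (Fc m i) (pb (Pe m) (Fc m j) (Gc m k)) y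
      = -(get y i) * pb (Pe m) (Fc m j) (Gc m k) y := by
  rw [pb_FG m j k hm hj1 hjm hk1 hkm]
  by_cases hjk : j + k < m + 1
  · have hinner : peFG m j k = fun x => -(get x j * get x ((m-1)+k)) := by
      funext x; unfold peFG; rw [if_pos hjk]
    simp only [hinner]
    rw [pb_F_mul m hm i j k hi1 him hj1 hjm hk1 hkm]
    unfold peFG
    rw [if_pos (by omega : i + k < m + 1)]
    ring
  · have hinner : peFG m j k = fun x => -(get x (m-k) * get x ((m-1)+(m-j))) := by
      funext x; unfold peFG; rw [if_neg hjk]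
    simp only [hinner]
    rw [pb_F_mul m hm i (m-k) (m-j) hi1 him (by omega) (by omega) (by omega) (by omega)]
    unfold peFG
    rw [if_pos (by omega : i + (m-j) < m + 1)]
    ring

lemma clause2 (m : ℕ) (hm : 2 ≤ m) (i j k : ℕ)
    (hi1 : 1 ≤ i) (him : i ≤ m-1) (hj1 : 1 ≤ j) (hjm : j ≤ m-1)
    (hk1 : 1 ≤ k) (hkm : k ≤ m-1) (hji : j ≤ i) (y : Fin (2*m-1) → ℝ) :
    pb (Pe m) (Fc m i) (pb (Pe m) (Fc m j) (Gc m k)) y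
      = -(get y j) * pb (Pe m) (Fc m i) (Gc m k) y := by
  rw [pb_FG m j k hm hj1 hjm hk1 hkm, pb_FG m i k hm hi1 him hk1 hkm]
  by_cases hjk : j + k < m + 1
  · have hinner : peFG m j k = fun x => -(get x j * get x ((m-1)+k)) := by
      funext x; unfold peFG; rw [if_pos hjk]
    simp only [hinner]
    rw [pb_F_mul m hm i j k hi1 him hj1 hjm hk1 hkm]
    ring
  · have hinner : peFG m j k = fun x => -(get x (m-k) * get x ((m-1)+(m-j))) := by
      funext x; unfold peFG; rw [if_neg hjk]
    simp only [hinner]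
    rw [pb_F_mul m hm i (m-k) (m-j) hi1 him (by omega) (by omega) (by omega) (by omega)]
    by_cases hij : i + (m-j) < m + 1
    · have hieqj : i = j := by omega
      subst hieqj
      unfold peFG
      rw [if_pos hij, if_neg (by omega : ¬ i + k < m + 1)]
      ring
    · unfold peFG
      rw [if_neg hij, if_neg (by omega : ¬ i + k < m + 1)]
      have h1 : m - (m - j) = j := by omega
      rw [h1]
      ring

end helpers

/-- In the even-case abstract algebra: `{F_i,{F_j,G_k}} = -F_i {F_j,G_k}` when `i ≤ j`
and `{F_i,{F_j,G_k}} = -F_j {F_i,G_k}` when `j ≤ i`; consequently the Jacobi identity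
holds for every triple `(F_i, F_j, G_k)`. -/
theorem even_FFG_identities (m : ℕ) (hm : 2 ≤ m) (i j k : ℕ)
    (hi1 : 1 ≤ i) (him : i ≤ m-1) (hj1 : 1 ≤ j) (hjm : j ≤ m-1)
    (hk1 : 1 ≤ k) (hkm : k ≤ m-1) (y : Fin (2*m-1) → ℝ) :
    (i ≤ j → pb (Pe m) (Fc m i) (pb (Pe m) (Fc m j) (Gc m k)) y
        = -(get y i) * pb (Pe m) (Fc m j) (Gc m k) y) ∧
    (j ≤ i → pb (Pe m) (Fc m i) (pb (Pe m) (Fc m j) (Gc m k)) y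
        = -(get y j) * pb (Pe m) (Fc m i) (Gc m k) y) ∧
    pb (Pe m) (Fc m i) (pb (Pe m) (Fc m j) (Gc m k)) y
      + pb (Pe m) (Fc m j) (pb (Pe m) (Gc m k) (Fc m i)) y
      + pb (Pe m) (Gc m k) (pb (Pe m) (Fc m i) (Fc m j)) y = 0 := by
  refine ⟨fun hij => clause1 m hm i j k hi1 him hj1 hjm hk1 hkm hij y,
          fun hji => clause2 m hm i j k hi1 him hj1 hjm hk1 hkm hji y, ?_⟩
  rw [pb_FF m i j hm him hjm, pb_zero_right]
  have hB : pb (Pe m) (Gc m k) (Fc m i)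
      = fun x => -(pb (Pe m) (Fc m i) (Gc m k) x) := by
    rw [pb_GF m i k hm hi1 him hk1 hkm, pb_FG m i k hm hi1 him hk1 hkm]
  rw [hB, pb_neg_right]
  rcases le_total i j with h | h
  · rw [clause1 m hm i j k hi1 him hj1 hjm hk1 hkm h y,
        clause2 m hm j i k hj1 hjm hi1 him hk1 hkm h y]
    ring
  · rw [clause2 m hm i j k hi1 him hj1 hjm hk1 hkm h y,
        clause1 m hm j i k hj1 hjm hi1 him hk1 hkm h y]
    ring
end
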